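/- For any set S of n ≥ 3 points in general position in the plane, Σ_{k=3}^{n} Σ_{ℓ=0}^{n−3} Fib(k+2ℓ) · X_{k,ℓ}(S) = Fib(2n) − n − binom(n,2), where Fib denotes the Fibonacci sequence with Fib(0)=0, Fib(1)=1. -/

import Mathlib

open Finset
open scoped Classical

def GenPos (S : Finset (ℝ × ℝ)) : Prop :=
  ∀ T ⊆ S, T.card = 3 → ¬ Collinear ℝ (T : Set (ℝ × ℝ))

def ConvexPos (T : Finset (ℝ × ℝ)) : Prop :=
  ∀ p ∈ T, p ∉ convexHull ℝ ((T : Set (ℝ × ℝ)) \ {p})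

/-- number of convex k-gons with vertices in S and exactly l points of S inside -/
noncomputable def X (S : Finset (ℝ × ℝ)) (k l : ℕ) : ℕ :=
  ((Finset.powersetCard k S).filter (fun T => ConvexPos T ∧
    (S.filter (fun p => p ∈ interior (convexHull ℝ (T : Set (ℝ × ℝ))))).card = l)).card

/-- number of extreme points (convex hull vertices) of S -/
noncomputable def hullVerts (S : Finset (ℝ × ℝ)) : ℕ :=
  (S.filter (fun p => p ∉ convexHull ℝ ((S : Set (ℝ × ℝ)) \ {p}))).card

/-!
Every `T ⊆ S` with at least three points is determined by its set `P` of hull vertices, a convex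
polygon, together with `T \ P`, an arbitrary set of points of `S` strictly inside `P`: general
position puts every non-vertex of `T` in the open interior of the hull and leaves `P` with at least
three vertices. Since `∑_{J ⊆ I} Fib (a + |J|) = Fib (a + 2|I|)`, summing `Fib |T|` over the
subsets sharing a polygon `P` with `l` interior points gives `Fib (|P| + 2l)`, so the left-hand
side is `∑_{T ⊆ S, |T| ≥ 3} Fib |T|`. The same identity with `a = 0` gives
`∑_{T ⊆ S} Fib |T| = Fib (2n)`, and the subsets with fewer than three points contribute
`n + binom(n, 2)`.
-/

theorem Finset.sum_powerset_fib_add_card {α : Type*} (I : Finset α) (a : ℕ) :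
    ∑ J ∈ I.powerset, Nat.fib (a + J.card) = Nat.fib (a + 2 * I.card) := by
  induction I using Finset.induction_on generalizing a with
  | empty => simp
  | insert x I hx ih =>
    have hinsert : ∑ J ∈ I.powerset, Nat.fib (a + (insert x J).card) =
        ∑ J ∈ I.powerset, Nat.fib (a + 1 + J.card) :=
      sum_congr rfl fun J hJ => by
        rw [card_insert_of_notMem fun hxJ => hx (mem_powerset.1 hJ hxJ), ← add_assoc,
          add_right_comm]
    rw [sum_powerset_insert hx, hinsert, ih, ih, card_insert_of_notMem hx, mul_add,
      add_right_comm, ← add_assoc, Nat.fib_add_two, add_comm (Nat.fib _)]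

theorem Finset.sum_powerset_fib_card {α : Type*} (S : Finset α) :
    ∑ T ∈ S.powerset, Nat.fib T.card = Nat.fib (2 * S.card) := by
  simpa using sum_powerset_fib_add_card S 0

theorem Finset.sum_powerset_filter_card_lt_three_fib {α : Type*} (S : Finset α) :
    ∑ T ∈ S.powerset with ¬ 3 ≤ T.card, Nat.fib T.card = S.card + S.card.choose 2 := by
  have hmaps : ∀ T ∈ S.powerset.filter (¬ 3 ≤ ·.card), T.card ∈ range 3 := fun T hT => by
    simpa using (mem_filter.1 hT).2
  have hfiber : ∀ m ∈ range 3,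
      (S.powerset.filter (¬ 3 ≤ ·.card)).filter (·.card = m) = S.powersetCard m := by
    intro m hm
    rw [filter_filter, powersetCard_eq_filter]
    refine filter_congr fun T _ => ?_
    have := mem_range.1 hm
    omega
  rw [← sum_fiberwise_of_maps_to hmaps, sum_congr rfl fun m hm => by rw [hfiber m hm]]
  simp [sum_range_succ, sum_powersetCard, Nat.choose_one_right]

section Vertices

variable {E : Type*} [NormedAddCommGroup E] [NormedSpace ℝ E]

noncomputable def vertices (T : Finset E) : Finset E :=
  T.filter (· ∈ (convexHull ℝ (T : Set E)).extremePoints ℝ)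

theorem coe_vertices (T : Finset E) :
    (vertices T : Set E) = (convexHull ℝ (T : Set E)).extremePoints ℝ := by
  ext x
  simpa [vertices] using fun hx => mem_coe.1 (extremePoints_convexHull_subset hx)

theorem vertices_subset (T : Finset E) : vertices T ⊆ T := filter_subset _ _

theorem convexHull_vertices (T : Finset E) :
    convexHull ℝ (vertices T : Set E) = convexHull ℝ (T : Set E) := by
  have hfin : (vertices T : Set E).Finite := (vertices T).finite_toSet
  rw [← (hfin.isClosed_convexHull ℝ).closure_eq, coe_vertices]
  exact closure_convexHull_extremePoints (T.finite_toSet.isCompact_convexHull ℝ)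
    (convex_convexHull ℝ _)

theorem convexIndependent_vertices (T : Finset E) :
    ConvexIndependent ℝ ((↑) : ↥(vertices T : Set E) → E) :=
  coe_vertices T ▸ (convex_convexHull ℝ _).convexIndependent_extremePoints

theorem extremePoints_convexHull_eq_self {P : Finset E}
    (hP : ConvexIndependent ℝ ((↑) : ↥(P : Set E) → E)) :
    (convexHull ℝ (P : Set E)).extremePoints ℝ = P := by
  refine extremePoints_convexHull_subset.antisymm fun x hx => by_contra fun hxv => ?_
  refine convexIndependent_set_iff_notMem_convexHull_sdiff.1 hP x hx ?_
  rw [← coe_vertices] at hxv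
  have hsub : (vertices P : Set E) ⊆ (P : Set E) \ {x} := fun y hy =>
    ⟨vertices_subset P hy, by rintro rfl; exact hxv hy⟩
  exact convexHull_mono hsub (convexHull_vertices P ▸ subset_convexHull ℝ _ hx)

theorem vertices_union_of_subset_convexHull [DecidableEq E] {P J : Finset E}
    (hP : ConvexIndependent ℝ ((↑) : ↥(P : Set E) → E))
    (hJ : (J : Set E) ⊆ convexHull ℝ (P : Set E)) : vertices (P ∪ J) = P := by
  have hhull : convexHull ℝ ((P ∪ J : Finset E) : Set E) = convexHull ℝ (P : Set E) :=
    (convexHull_min (coe_union P J ▸ Set.union_subset (subset_convexHull ℝ _) hJ)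
      (convex_convexHull ℝ _)).antisymm (convexHull_mono (by simp))
  rw [← coe_inj, coe_vertices, hhull, extremePoints_convexHull_eq_self hP]

theorem disjoint_interior_convexHull_of_convexIndependent [Nontrivial E] {P : Finset E}
    (hP : ConvexIndependent ℝ ((↑) : ↥(P : Set E) → E)) :
    Disjoint (P : Set E) (interior (convexHull ℝ (P : Set E))) := by
  nth_rw 1 [← extremePoints_convexHull_eq_self hP]
  exact (disjoint_interior_extremePoints _).symm

noncomputable def interiorPoints (S P : Finset E) : Finset E :=
  S.filter (· ∈ interior (convexHull ℝ (P : Set E)))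

end Vertices

theorem collinear_of_card_le_two {k V P : Type*} [DivisionRing k] [AddCommGroup V] [Module k V]
    [AddTorsor V P] {s : Finset P} (hs : s.card ≤ 2) : Collinear k (s : Set P) := by
  interval_cases hc : s.card
  · simp [card_eq_zero.1 hc, collinear_empty]
  · obtain ⟨a, rfl⟩ := card_eq_one.1 hc
    simp [collinear_singleton]
  · obtain ⟨a, b, -, rfl⟩ := card_eq_two.1 hc
    simpa using collinear_pair k a b

theorem Collinear.convexHull {𝕜 E : Type*} [Field 𝕜] [PartialOrder 𝕜] [AddCommGroup E]
    [Module 𝕜 E] {s : Set E} (hs : Collinear 𝕜 s) : Collinear 𝕜 (convexHull 𝕜 s) := by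
  unfold Collinear at hs ⊢
  rwa [← direction_affineSpan, affineSpan_convexHull, direction_affineSpan]

theorem convexPos_iff_convexIndependent {T : Finset (ℝ × ℝ)} :
    ConvexPos T ↔ ConvexIndependent ℝ ((↑) : ↥(T : Set (ℝ × ℝ)) → ℝ × ℝ) :=
  convexIndependent_set_iff_notMem_convexHull_sdiff.symm

theorem GenPos.mono {S T : Finset (ℝ × ℝ)} (hS : GenPos S) (hT : T ⊆ S) : GenPos T :=
  fun U hU => hS U (hU.trans hT)

theorem GenPos.card_le_two_of_collinear {T : Finset (ℝ × ℝ)} (hT : GenPos T)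
    (hc : Collinear ℝ (T : Set (ℝ × ℝ))) : T.card ≤ 2 := by
  by_contra! h3
  obtain ⟨U, hUT, hU⟩ := exists_subset_card_eq (show 3 ≤ T.card by omega)
  exact hT U hUT hU (hc.subset (coe_subset.2 hUT))

theorem GenPos.card_eq_three_of_mem_affineSpan {T : Finset (ℝ × ℝ)} (hT : GenPos T)
    {ι : Type*} [Fintype ι] {z : ι → ℝ × ℝ} (hz : AffineIndependent ℝ z)
    (hzT : Set.range z ⊆ T) {p : ℝ × ℝ} (hp : p ∈ T) (hpz : p ∉ Set.range z)
    (hspan : p ∈ affineSpan ℝ (Set.range z)) : Fintype.card ι = 3 := by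
  rcases isEmpty_or_nonempty ι with hι | hι
  · simp [Set.range_eq_empty, AffineSubspace.notMem_bot] at hspan
  refine le_antisymm ?_ ?_
  · have := Submodule.finrank_le (vectorSpan ℝ (Set.range z))
    simp only [Module.finrank_prod, Module.finrank_self] at this
    have := hz.card_le_finrank_succ
    omega
  by_contra! hlt
  have hcol : Collinear ℝ (insert p (Set.range z)) := by
    rw [collinear_insert_iff_of_mem_affineSpan hspan, collinear_iff_finrank_le_one]
    have := finrank_vectorSpan_range_add_one_le ℝ z
    omega
  have hAT : insert p (univ.image z) ⊆ T :=
    insert_subset hp fun x hx => by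
      obtain ⟨i, -, rfl⟩ := mem_image.1 hx
      exact hzT (Set.mem_range_self i)
  have hAcard : (insert p (univ.image z)).card = Fintype.card ι + 1 := by
    rw [card_insert_of_notMem (by simpa using hpz), card_image_of_injective _ hz.injective,
      card_univ]
  have := (hT.mono hAT).card_le_two_of_collinear (by simpa using hcol)
  have hone : Fintype.card ι = 1 := by
    have := Fintype.card_pos (α := ι)
    omega
  obtain ⟨_⟩ := Fintype.card_eq_one_iff_nonempty_unique.1 hone
  rw [Set.range_unique, AffineSubspace.mem_affineSpan_singleton] at hspan
  exact hpz (hspan ▸ Set.mem_range_self _)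

/- By Carathéodory, `p` is a combination with positive weights of affinely independent points
of `T \ {p}`; general position forces three of them, and then these weights are the (positive)
barycentric coordinates of `p` with respect to a triangle. -/
theorem GenPos.mem_interior_convexHull {T : Finset (ℝ × ℝ)} (hT : GenPos T) {p : ℝ × ℝ}
    (hp : p ∈ T) (hhull : p ∈ convexHull ℝ ((T : Set (ℝ × ℝ)) \ {p})) :
    p ∈ interior (convexHull ℝ (T : Set (ℝ × ℝ))) := by
  obtain ⟨ι, _, z, w, hzT, hz, hw0, hw1, hpz⟩ := eq_pos_convex_span_of_mem_convexHull hhull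
  have hcomb : univ.affineCombination ℝ z w = p := by
    rwa [Finset.affineCombination_eq_linear_combination _ _ _ hw1]
  have hcard := hT.card_eq_three_of_mem_affineSpan hz (fun x hx => (hzT hx).1) hp
    (fun hmem => (hzT hmem).2 rfl) (hcomb ▸ affineCombination_mem_affineSpan hw1 z)
  let b : AffineBasis ι ℝ (ℝ × ℝ) :=
    ⟨z, hz, hz.affineSpan_eq_top_iff_card_eq_finrank_add_one.2 (by simp [hcard])⟩
  refine interior_mono (convexHull_mono fun x hx => (hzT hx).1) ?_
  change p ∈ interior (convexHull ℝ (Set.range b))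
  rw [b.interior_convexHull]
  intro i
  rw [← hcomb]
  exact (b.coord_apply_combination_of_mem (mem_univ i) hw1).symm ▸ hw0 i

theorem GenPos.three_le_card_vertices {T : Finset (ℝ × ℝ)} (hT : GenPos T)
    (h3 : 3 ≤ T.card) : 3 ≤ (vertices T).card := by
  by_contra! hlt
  have hcol : Collinear ℝ (T : Set (ℝ × ℝ)) :=
    (collinear_of_card_le_two (s := vertices T) (by omega)).convexHull.subset
      (convexHull_vertices T ▸ subset_convexHull ℝ _)
  have := hT.card_le_two_of_collinear hcol
  omega

theorem GenPos.sdiff_vertices_subset_interior {T : Finset (ℝ × ℝ)} (hT : GenPos T) :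
    ((T \ vertices T : Finset (ℝ × ℝ)) : Set (ℝ × ℝ)) ⊆
      interior (convexHull ℝ (vertices T : Set (ℝ × ℝ))) := by
  intro p hp
  obtain ⟨hpT, hpv⟩ := mem_sdiff.1 hp
  have hsub : (vertices T : Set (ℝ × ℝ)) ⊆ (T : Set (ℝ × ℝ)) \ {p} := fun y hy =>
    ⟨vertices_subset T hy, by rintro rfl; exact hpv hy⟩
  rw [convexHull_vertices]
  exact hT.mem_interior_convexHull hpT
    (convexHull_mono hsub (convexHull_vertices T ▸ subset_convexHull ℝ _ hpT))

theorem disjoint_interiorPoints {S P : Finset (ℝ × ℝ)} (hP : ConvexPos P) :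
    Disjoint P (interiorPoints S P) := by
  rw [← disjoint_coe]
  exact (disjoint_interior_convexHull_of_convexIndependent
    (convexPos_iff_convexIndependent.1 hP)).mono_right fun x hx => (mem_filter.1 hx).2

noncomputable def convexPolygons (S : Finset (ℝ × ℝ)) : Finset (Finset (ℝ × ℝ)) :=
  S.powerset.filter fun P => ConvexPos P ∧ 3 ≤ P.card

theorem mem_convexPolygons {S P : Finset (ℝ × ℝ)} :
    P ∈ convexPolygons S ↔ P ⊆ S ∧ ConvexPos P ∧ 3 ≤ P.card := by
  rw [convexPolygons, mem_filter, mem_powerset]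

theorem GenPos.sum_fib_card_eq_sum_convexPolygons {S : Finset (ℝ × ℝ)} (hS : GenPos S) :
    ∑ T ∈ S.powerset with 3 ≤ T.card, Nat.fib T.card =
      ∑ P ∈ convexPolygons S, Nat.fib (P.card + 2 * (interiorPoints S P).card) := by
  rw [sum_congr rfl fun P _ => (sum_powerset_fib_add_card _ _).symm, sum_sigma']
  symm
  refine sum_nbij' (fun x => x.1 ∪ x.2) (fun T => ⟨vertices T, T \ vertices T⟩) ?_ ?_ ?_ ?_ ?_
  · rintro ⟨P, J⟩ hx
    simp only [mem_sigma, mem_convexPolygons, mem_powerset] at hx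
    simp only [mem_filter, mem_powerset]
    exact ⟨union_subset hx.1.1 (hx.2.trans (filter_subset _ _)),
      hx.1.2.2.trans (card_le_card subset_union_left)⟩
  · intro T hT
    obtain ⟨hTS, hT3⟩ := mem_filter.1 hT
    have hT := hS.mono (mem_powerset.1 hTS)
    simp only [mem_sigma, mem_convexPolygons, mem_powerset]
    exact ⟨⟨(vertices_subset T).trans (mem_powerset.1 hTS),
      convexPos_iff_convexIndependent.2 (convexIndependent_vertices T),
      hT.three_le_card_vertices hT3⟩,
      fun p hp => mem_filter.2 ⟨mem_powerset.1 hTS (mem_sdiff.1 hp).1,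
        hT.sdiff_vertices_subset_interior hp⟩⟩
  · rintro ⟨P, J⟩ hx
    simp only [mem_sigma, mem_convexPolygons, mem_powerset] at hx
    have hdisj := disjoint_of_subset_right hx.2 (disjoint_interiorPoints hx.1.2.1)
    have hJ : (J : Set (ℝ × ℝ)) ⊆ convexHull ℝ (P : Set (ℝ × ℝ)) := fun x hxJ =>
      interior_subset (mem_filter.1 (hx.2 hxJ)).2
    dsimp only
    rw [vertices_union_of_subset_convexHull (convexPos_iff_convexIndependent.1 hx.1.2.1) hJ,
      union_sdiff_cancel_left hdisj]
  · intro T _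
    exact union_sdiff_of_subset (vertices_subset T)
  · rintro ⟨P, J⟩ hx
    simp only [mem_sigma, mem_convexPolygons, mem_powerset] at hx
    rw [card_union_of_disjoint (disjoint_of_subset_right hx.2 (disjoint_interiorPoints hx.1.2.1))]

theorem sum_mul_X_eq_sum_convexPolygons (S : Finset (ℝ × ℝ)) (f : ℕ → ℕ → ℕ) :
    ∑ k ∈ Icc 3 S.card, ∑ l ∈ range (S.card - 2), f k l * X S k l =
      ∑ P ∈ convexPolygons S, f P.card (interiorPoints S P).card := by
  have hmaps : ∀ P ∈ convexPolygons S,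
      (P.card, (interiorPoints S P).card) ∈ Icc 3 S.card ×ˢ range (S.card - 2) := by
    intro P hP
    obtain ⟨hPS, hP, hP3⟩ := mem_convexPolygons.1 hP
    have := card_union_of_disjoint (disjoint_interiorPoints (S := S) hP) ▸
      card_le_card (union_subset hPS (filter_subset _ S))
    simp only [mem_product, mem_Icc, mem_range]
    omega
  rw [← sum_product', ← sum_fiberwise_of_maps_to hmaps]
  refine sum_congr rfl fun ⟨k, l⟩ hkl => ?_
  have hfiber : ∀ P ∈ (convexPolygons S).filter
      (fun P => (P.card, (interiorPoints S P).card) = (k, l)),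
      f P.card (interiorPoints S P).card = f k l := fun P hP => by
    obtain ⟨hk, hl⟩ := Prod.mk.inj (mem_filter.1 hP).2
    rw [hk, hl]
  rw [sum_congr rfl hfiber, sum_const, smul_eq_mul, mul_comm]
  congr 1
  rw [X]
  congr 1
  ext P
  have hk : 3 ≤ k := (mem_Icc.1 (mem_product.1 hkl).1).1
  simp only [mem_filter, mem_powersetCard, mem_convexPolygons, Prod.mk.injEq, interiorPoints]
  constructor
  · rintro ⟨⟨hPS, rfl⟩, hP, hl⟩
    exact ⟨⟨hPS, hP, hk⟩, rfl, hl⟩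
  · rintro ⟨⟨hPS, hP, -⟩, hPk, hl⟩
    exact ⟨⟨hPS, hPk⟩, hP, hl⟩

theorem stmt8_general (S : Finset (ℝ × ℝ)) (hgp : GenPos S) :
    ∑ k ∈ Finset.Icc 3 S.card, ∑ l ∈ Finset.range (S.card - 2),
      (Nat.fib (k + 2 * l) : ℤ) * X S k l =
    (Nat.fib (2 * S.card) : ℤ) - S.card - S.card.choose 2 := by
  have htotal := sum_filter_add_sum_filter_not S.powerset (3 ≤ ·.card) fun T => Nat.fib T.card
  rw [hgp.sum_fib_card_eq_sum_convexPolygons,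
    ← sum_mul_X_eq_sum_convexPolygons S fun k l => Nat.fib (k + 2 * l),
    sum_powerset_filter_card_lt_three_fib, sum_powerset_fib_card] at htotal
  rw [← htotal]
  push_cast
  ring

theorem stmt8 (S : Finset (ℝ × ℝ)) (hgp : GenPos S) (hn : 3 ≤ S.card) :
    ∑ k ∈ Finset.Icc 3 S.card, ∑ l ∈ Finset.range (S.card - 2),
      (Nat.fib (k + 2 * l) : ℤ) * X S k l =
    (Nat.fib (2 * S.card) : ℤ) - S.card - S.card.choose 2 :=
  stmt8_general S hgp
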